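/- arXiv:1507.01216 — 2 statements merged into one kernel-verified Lean document; each statement's English description precedes it below -/
import Mathlib

section
/- Let G be a strongly pseudo-convex Finsler metric in local coordinates and define K_{i j̄ α β̄} = −G_{i j̄ α β̄} + Σ_{k,l} G^{k l̄} G_{i l̄ α} G_{k j̄ β̄}. Then the identity Σ_{j,k} (∂²(log G)/∂v^j∂v̄^k) Γ^j_{lα} v^l (Γ^k_{sβ} v^s)‾ = (1/G²)(G · Σ_{k,h} G_{k̄α} G_{hβ̄} G^{k̄h} − G_α G_β̄) holds for v ≠ 0, where G_α = ∂G/∂z^α, Γ^k_{iα} = Σ_j (∂G_{i j̄}/∂z^α) G^{j̄k}. -/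
open Complex
open scoped ComplexOrder

noncomputable section

/-- The local model of a vector bundle: base coordinates `z : ℂⁿ`, fiber coordinates `v : ℂʳ`. -/
abbrev Dom (n r : ℕ) := (Fin n → ℂ) × (Fin r → ℂ)

/-- Wirtinger derivative `∂/∂vⁱ` in the fiber variables. -/
def wv {n r : ℕ} (i : Fin r) (f : Dom n r → ℂ) : Dom n r → ℂ := fun p =>
  (fderiv ℝ f p (0, Pi.single i 1) - I * fderiv ℝ f p (0, Pi.single i I)) / 2

/-- Wirtinger derivative `∂/∂v̄ⁱ` in the fiber variables. -/
def wvb {n r : ℕ} (i : Fin r) (f : Dom n r → ℂ) : Dom n r → ℂ := fun p =>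
  (fderiv ℝ f p (0, Pi.single i 1) + I * fderiv ℝ f p (0, Pi.single i I)) / 2

/-- Wirtinger derivative `∂/∂zᵅ` in the base variables. -/
def wz {n r : ℕ} (a : Fin n) (f : Dom n r → ℂ) : Dom n r → ℂ := fun p =>
  (fderiv ℝ f p (Pi.single a 1, 0) - I * fderiv ℝ f p (Pi.single a I, 0)) / 2

/-- Wirtinger derivative `∂/∂z̄ᵅ` in the base variables. -/
def wzb {n r : ℕ} (a : Fin n) (f : Dom n r → ℂ) : Dom n r → ℂ := fun p =>
  (fderiv ℝ f p (Pi.single a 1, 0) + I * fderiv ℝ f p (Pi.single a I, 0)) / 2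

/-- The complexification of a real valued function. -/
def cx {n r : ℕ} (G : Dom n r → ℝ) : Dom n r → ℂ := fun p => (G p : ℂ)

/-- The fiberwise Levi matrix `(G_{i j̄}) = (∂²G/∂vⁱ∂v̄ʲ)`. -/
def Gmat {n r : ℕ} (G : Dom n r → ℝ) (p : Dom n r) : Matrix (Fin r) (Fin r) ℂ :=
  Matrix.of fun i j => wvb j (wv i (cx G)) p
/-- The horizontal connection coefficients `Γᵏ_{iα} = Σⱼ (∂G_{i j̄}/∂zᵅ) G^{j̄ k}`. -/
def Gam {n r : ℕ} (G : Dom n r → ℝ) (k i : Fin r) (a : Fin n) (p : Dom n r) : ℂ :=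
  ∑ j : Fin r, wz a (fun q => Gmat G q i j) p * (Gmat G p)⁻¹ j k

/-- The complex logarithm of a Finsler metric. -/
def lg {n r : ℕ} (G : Dom n r → ℝ) : Dom n r → ℂ := fun p => Complex.log (G p : ℂ)

namespace KA

variable {n r : ℕ}

/-- generic Wirtinger-type operator -/
def Wd (u u' : Dom n r) (s : ℂ) (f : Dom n r → ℂ) : Dom n r → ℂ := fun p =>
  (fderiv ℝ f p u + s * fderiv ℝ f p u') / 2

lemma wv_eq_Wd (i : Fin r) (f : Dom n r → ℂ) :
    wv i f = Wd (0, Pi.single i 1) (0, Pi.single i I) (-I) f := by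
  funext p; simp only [wv, Wd]; ring

lemma wvb_eq_Wd (i : Fin r) (f : Dom n r → ℂ) :
    wvb i f = Wd (0, Pi.single i 1) (0, Pi.single i I) I f := rfl

lemma wz_eq_Wd (a : Fin n) (f : Dom n r → ℂ) :
    wz a f = Wd (Pi.single a 1, 0) (Pi.single a I, 0) (-I) f := by
  funext p; simp only [wz, Wd]; ring

lemma wzb_eq_Wd (a : Fin n) (f : Dom n r → ℂ) :
    wzb a f = Wd (Pi.single a 1, 0) (Pi.single a I, 0) I f := rfl

lemma Wd_eq {u u' : Dom n r} {s : ℂ} {f : Dom n r → ℂ} {p : Dom n r} {L : Dom n r →L[ℝ] ℂ}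
    (h : HasFDerivAt f L p) : Wd u u' s f p = (L u + s * L u') / 2 := by
  simp only [Wd]; rw [h.fderiv]

lemma Wd_congr {f₁ f₂ : Dom n r → ℂ} {p : Dom n r} (h : f₁ =ᶠ[nhds p] f₂) (u u' : Dom n r)
    (s : ℂ) : Wd u u' s f₁ p = Wd u u' s f₂ p := by
  simp only [Wd]; rw [h.fderiv_eq]

lemma contDiffAt_Wd {f : Dom n r → ℂ} {p : Dom n r} (hf : ContDiffAt ℝ (⊤ : ℕ∞) f p)
    (u u' : Dom n r) (s : ℂ) : ContDiffAt ℝ (⊤ : ℕ∞) (Wd u u' s f) p := by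
  have h1 : ContDiffAt ℝ (⊤ : ℕ∞) (fderiv ℝ f) p := hf.fderiv_right (m := (⊤ : ℕ∞)) (by simp)
  have h2 : ContDiffAt ℝ (⊤ : ℕ∞) (fun q => fderiv ℝ f q u) p :=
    (ContinuousLinearMap.apply ℝ ℂ u).contDiff.contDiffAt.comp p h1
  have h3 : ContDiffAt ℝ (⊤ : ℕ∞) (fun q => fderiv ℝ f q u') p :=
    (ContinuousLinearMap.apply ℝ ℂ u').contDiff.contDiffAt.comp p h1
  exact (h2.add (contDiffAt_const.mul h3)).div_const 2

lemma hasFDerivAt_Wd {f : Dom n r → ℂ} {p : Dom n r} (hf : ContDiffAt ℝ (⊤ : ℕ∞) f p)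
    (u u' : Dom n r) (s : ℂ) :
    ∃ L : Dom n r →L[ℝ] ℂ, HasFDerivAt (Wd u u' s f) L p ∧
      ∀ w, L w = (fderiv ℝ (fderiv ℝ f) p w u + s * fderiv ℝ (fderiv ℝ f) p w u') / 2 := by
  have h1 : ContDiffAt ℝ (⊤ : ℕ∞) (fderiv ℝ f) p := hf.fderiv_right (m := (⊤ : ℕ∞)) (by simp)
  have hd : HasFDerivAt (fderiv ℝ f) (fderiv ℝ (fderiv ℝ f) p) p :=
    (h1.differentiableAt (by simp)).hasFDerivAt
  have hA : HasFDerivAt (fun q => fderiv ℝ f q u)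
      ((ContinuousLinearMap.apply ℝ ℂ u).comp (fderiv ℝ (fderiv ℝ f) p)) p :=
    (ContinuousLinearMap.apply ℝ ℂ u).hasFDerivAt.comp p hd
  have hB : HasFDerivAt (fun q => fderiv ℝ f q u')
      ((ContinuousLinearMap.apply ℝ ℂ u').comp (fderiv ℝ (fderiv ℝ f) p)) p :=
    (ContinuousLinearMap.apply ℝ ℂ u').hasFDerivAt.comp p hd
  have hC := ((hA.add (hB.const_mul s)).const_mul ((2:ℂ)⁻¹)).congr_of_eventuallyEq
    (Filter.Eventually.of_forall (fun q => by show Wd u u' s f q = _; simp only [Wd, Pi.add_apply]; ring))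
  refine ⟨_, hC, fun w => ?_⟩
  simp [ContinuousLinearMap.add_apply, ContinuousLinearMap.smul_apply,
    ContinuousLinearMap.comp_apply, ContinuousLinearMap.apply_apply, smul_eq_mul]
  ring

lemma Wd_Wd {f : Dom n r → ℂ} {p : Dom n r} (hf : ContDiffAt ℝ (⊤ : ℕ∞) f p)
    (u u' w w' : Dom n r) (s t : ℂ) :
    Wd u u' s (Wd w w' t f) p = Wd w w' t (Wd u u' s f) p := by
  obtain ⟨L1, hL1, he1⟩ := hasFDerivAt_Wd hf w w' t
  obtain ⟨L2, hL2, he2⟩ := hasFDerivAt_Wd hf u u' s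
  have hsym := hf.isSymmSndFDerivAt (by simp; exact WithTop.coe_le_coe.mpr le_top)
  rw [Wd_eq hL1, Wd_eq hL2, he1, he1, he2, he2, hsym u w, hsym u w', hsym u' w, hsym u' w']
  ring

lemma Wd_sum {ι : Type*} (T : Finset ι) {f : ι → Dom n r → ℂ} {p : Dom n r} (c : ι → ℂ)
    (hf : ∀ i ∈ T, DifferentiableAt ℝ (f i) p) (u u' : Dom n r) (s : ℂ) :
    Wd u u' s (fun q => ∑ i ∈ T, c i * f i q) p = ∑ i ∈ T, c i * Wd u u' s (f i) p := by
  have h : HasFDerivAt (fun q => ∑ i ∈ T, c i * f i q) (∑ i ∈ T, c i • fderiv ℝ (f i) p) p :=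
    HasFDerivAt.fun_sum fun i hi => ((hf i hi).hasFDerivAt.const_mul (c i))
  rw [Wd_eq h]
  simp only [ContinuousLinearMap.sum_apply, ContinuousLinearMap.smul_apply, smul_eq_mul, Wd]
  rw [Finset.mul_sum, ← Finset.sum_add_distrib, Finset.sum_div]
  exact Finset.sum_congr rfl fun i _ => by ring

lemma Wd_mul {f g : Dom n r → ℂ} {p : Dom n r} (hf : DifferentiableAt ℝ f p)
    (hg : DifferentiableAt ℝ g p) (u u' : Dom n r) (s : ℂ) :
    Wd u u' s (fun q => f q * g q) p = Wd u u' s f p * g p + f p * Wd u u' s g p := by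
  have h := hf.hasFDerivAt.fun_mul hg.hasFDerivAt
  simp only [Wd]
  rw [h.fderiv]
  simp only [ContinuousLinearMap.add_apply, ContinuousLinearMap.smul_apply, smul_eq_mul]
  ring

lemma Wd_inv {g : Dom n r → ℂ} {p : Dom n r} (hg : DifferentiableAt ℝ g p) (hne : g p ≠ 0)
    (u u' : Dom n r) (s : ℂ) :
    Wd u u' s (fun q => (g q)⁻¹) p = -Wd u u' s g p / g p ^ 2 := by
  have h : HasFDerivAt (fun q => (g q)⁻¹)
      ((-ContinuousLinearMap.mulLeftRight ℝ ℂ (g p)⁻¹ (g p)⁻¹).comp (fderiv ℝ g p)) p :=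
    (hasFDerivAt_inv' hne).comp p hg.hasFDerivAt
  simp only [Wd]
  rw [h.fderiv]
  simp only [ContinuousLinearMap.comp_apply, ContinuousLinearMap.neg_apply,
    ContinuousLinearMap.mulLeftRight_apply]
  field_simp
  ring

lemma Wd_conj {f : Dom n r → ℂ} {p : Dom n r} (hf : DifferentiableAt ℝ f p)
    (u u' : Dom n r) (s : ℂ) :
    (starRingEnd ℂ) (Wd u u' s f p) =
      Wd u u' ((starRingEnd ℂ) s) (fun q => (starRingEnd ℂ) (f q)) p := by
  have h : HasFDerivAt (fun q => (starRingEnd ℂ) (f q))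
      ((conjCLE.toContinuousLinearMap).comp (fderiv ℝ f p)) p :=
    (conjCLE.toContinuousLinearMap.hasFDerivAt).comp p hf.hasFDerivAt
  rw [Wd_eq h]
  simp only [Wd, ContinuousLinearMap.comp_apply, ContinuousLinearEquiv.coe_coe, conjCLE_apply]
  rw [map_div₀, map_add, map_mul, map_ofNat]


lemma Wd_slice {f₁ f₂ : Dom n r → ℂ} {z : Fin n → ℂ} {v : Fin r → ℂ}
    (h₁ : DifferentiableAt ℝ f₁ (z, v)) (h₂ : DifferentiableAt ℝ f₂ (z, v))
    (h : ∀ z', f₁ (z', v) = f₂ (z', v)) (e e' : Fin n → ℂ) (s : ℂ) :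
    Wd (e, 0) (e', 0) s f₁ (z, v) = Wd (e, 0) (e', 0) s f₂ (z, v) := by
  have key : ∀ w : Fin n → ℂ,
      fderiv ℝ f₁ (z, v) ((w, 0) : Dom n r) = fderiv ℝ f₂ (z, v) ((w, 0) : Dom n r) := by
    intro w
    have hγ : HasDerivAt (fun t : ℝ => ((z, v) : Dom n r) + t • ((w, (0 : Fin r → ℂ)) : Dom n r))
        ((w, 0) : Dom n r) 0 := by
      simpa using ((hasDerivAt_id (0 : ℝ)).smul_const ((w, (0 : Fin r → ℂ)) : Dom n r)).const_add
        ((z, v) : Dom n r)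
    have hpt : ((z, v) : Dom n r) + (0 : ℝ) • ((w, (0 : Fin r → ℂ)) : Dom n r) = (z, v) := by simp
    have h1'' : HasFDerivAt f₁ (fderiv ℝ f₁ (z, v))
        (((z, v) : Dom n r) + (0 : ℝ) • ((w, (0 : Fin r → ℂ)) : Dom n r)) := by
      rw [hpt]; exact h₁.hasFDerivAt
    have h2'' : HasFDerivAt f₂ (fderiv ℝ f₂ (z, v))
        (((z, v) : Dom n r) + (0 : ℝ) • ((w, (0 : Fin r → ℂ)) : Dom n r)) := by
      rw [hpt]; exact h₂.hasFDerivAt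
    have H1 : HasDerivAt (fun t : ℝ => f₁ (((z, v) : Dom n r) + t • ((w, (0:Fin r → ℂ)) : Dom n r)))
        (fderiv ℝ f₁ (z, v) ((w, 0) : Dom n r)) 0 := by
      simpa [Function.comp_def] using h1''.comp_hasDerivAt 0 hγ
    have H2 : HasDerivAt (fun t : ℝ => f₂ (((z, v) : Dom n r) + t • ((w, (0:Fin r → ℂ)) : Dom n r)))
        (fderiv ℝ f₂ (z, v) ((w, 0) : Dom n r)) 0 := by
      simpa [Function.comp_def] using h2''.comp_hasDerivAt 0 hγ
    have hfun : (fun t : ℝ => f₁ (((z, v) : Dom n r) + t • ((w, (0:Fin r → ℂ)) : Dom n r)))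
        = fun t : ℝ => f₂ (((z, v) : Dom n r) + t • ((w, (0:Fin r → ℂ)) : Dom n r)) := by
      funext t
      have ht : ((z, v) : Dom n r) + t • ((w, (0:Fin r → ℂ)) : Dom n r) = (z + t • w, v) := by
        simp [Prod.ext_iff]
      rw [ht]; exact h _
    exact (hfun ▸ H1).unique H2
  simp only [Wd, key e, key e']

lemma clm_single_decomp (L : Dom n r →L[ℝ] ℂ) (m : Fin r) (c : ℂ) :
    L ((0, Pi.single m c) : Dom n r) =
      ((c + (starRingEnd ℂ) c) / 2) * L ((0, Pi.single m 1) : Dom n r) +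
        ((c - (starRingEnd ℂ) c) / (2 * I)) * L ((0, Pi.single m I) : Dom n r) := by
  have hsingle : ((0, Pi.single m c) : Dom n r)
      = (c.re : ℝ) • ((0, Pi.single m (1:ℂ)) : Dom n r)
        + (c.im : ℝ) • ((0, Pi.single m I) : Dom n r) := by
    refine Prod.ext (by simp) ?_
    funext j
    by_cases hj : j = m
    · subst hj; simp [Complex.real_smul, Complex.re_add_im]
    · simp [Pi.single_apply, Ne.symm hj, hj]
  have h1 : ((c + (starRingEnd ℂ) c) / 2 : ℂ) = (c.re : ℂ) := by
    rw [Complex.add_conj]; push_cast; ring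
  have h2 : ((c - (starRingEnd ℂ) c) / (2 * I) : ℂ) = (c.im : ℂ) := by
    rw [Complex.sub_conj]; push_cast
    field_simp
  rw [hsingle, map_add, map_smul, map_smul, h1, h2]
  simp [Complex.real_smul]

lemma euler_pair {f : Dom n r → ℂ} {p : Dom n r} {L : Dom n r →L[ℝ] ℂ}
    (h : HasFDerivAt f L p) (v : Fin r → ℂ) :
    ∑ l : Fin r, (v l * wv l f p + (starRingEnd ℂ) (v l) * wvb l f p)
      = L ((0, v) : Dom n r) := by
  have hterm : ∀ l : Fin r, v l * wv l f p + (starRingEnd ℂ) (v l) * wvb l f p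
      = L ((0, Pi.single l (v l)) : Dom n r) := by
    intro l
    rw [wv_eq_Wd, wvb_eq_Wd, Wd_eq h, Wd_eq h, clm_single_decomp L l (v l)]
    have h2I : (2 : ℂ) * I ≠ 0 := by simp [Complex.I_ne_zero]
    field_simp
    linear_combination (((starRingEnd ℂ) (v l) - v l) * L (0, Pi.single l I)) * Complex.I_sq
  rw [Finset.sum_congr rfl fun l _ => hterm l, ← map_sum]
  congr 1
  refine Prod.ext (by simp [Prod.fst_sum]) ?_
  rw [Prod.snd_sum]
  simpa using Finset.univ_sum_single v


/-- the coordinate function `q ↦ q.2 l` as a CLM -/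
def coordv (l : Fin r) : Dom n r →L[ℝ] ℂ :=
  (ContinuousLinearMap.proj l).comp (ContinuousLinearMap.snd ℝ (Fin n → ℂ) (Fin r → ℂ))

lemma coordv_apply (l : Fin r) (q : Dom n r) : coordv l q = q.2 l := rfl

lemma hasFDerivAt_coordv (l : Fin r) (p : Dom n r) :
    HasFDerivAt (fun q : Dom n r => q.2 l) (coordv l) p := (coordv l).hasFDerivAt

lemma wvb_coordv (k l : Fin r) (p : Dom n r) :
    wvb k (fun q : Dom n r => q.2 l) p = 0 := by
  rw [wvb_eq_Wd, Wd_eq (hasFDerivAt_coordv l p)]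
  by_cases h : l = k <;> simp [coordv_apply, Pi.single_apply, h]

lemma hasFDerivAt_coordv_conj (l : Fin r) (p : Dom n r) :
    HasFDerivAt (fun q : Dom n r => (starRingEnd ℂ) (q.2 l))
      ((conjCLE.toContinuousLinearMap).comp (coordv l)) p :=
  (conjCLE.toContinuousLinearMap.hasFDerivAt).comp p (hasFDerivAt_coordv l p)

lemma wv_coordv_conj (k l : Fin r) (p : Dom n r) :
    wv k (fun q : Dom n r => (starRingEnd ℂ) (q.2 l)) p = 0 := by
  rw [wv_eq_Wd, Wd_eq (hasFDerivAt_coordv_conj l p)]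
  by_cases hh : l = k <;> simp [coordv_apply, Pi.single_apply, hh]

lemma Wd_sum0 {ι : Type*} (T : Finset ι) {f : ι → Dom n r → ℂ} {p : Dom n r}
    (hf : ∀ i ∈ T, DifferentiableAt ℝ (f i) p) (u u' : Dom n r) (s : ℂ) :
    Wd u u' s (fun q => ∑ i ∈ T, f i q) p = ∑ i ∈ T, Wd u u' s (f i) p := by
  have h : HasFDerivAt (fun q => ∑ i ∈ T, f i q) (∑ i ∈ T, fderiv ℝ (f i) p) p :=
    HasFDerivAt.fun_sum fun i hi => (hf i hi).hasFDerivAt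
  rw [Wd_eq h]
  simp only [ContinuousLinearMap.sum_apply, Wd]
  rw [Finset.mul_sum, ← Finset.sum_add_distrib, Finset.sum_div]


def flineD (v : Fin r → ℂ) : ℂ →L[ℝ] Dom n r :=
  (0 : ℂ →L[ℝ] (Fin n → ℂ)).prod ((ContinuousLinearMap.id ℝ ℂ).smulRight v)

lemma flineD_apply (v : Fin r → ℂ) (c : ℂ) :
    flineD (n := n) v c = ((0, c • v) : Dom n r) := by
  simp [flineD]

lemma hasFDerivAt_fline (z : Fin n → ℂ) (v : Fin r → ℂ) (c₀ : ℂ) :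
    HasFDerivAt (fun c : ℂ => ((z, c • v) : Dom n r)) (flineD v) c₀ :=
  (hasFDerivAt_const z c₀).prodMk ((ContinuousLinearMap.id ℝ ℂ).smulRight v).hasFDerivAt

/-- the values of the differential of `G` along the fiber directions, from homogeneity -/
lemma fderiv_fiber {G : Dom n r → ℝ} {z : Fin n → ℂ} {w : Fin r → ℂ}
    (hd : DifferentiableAt ℝ (cx G) (z, w))
    (hhom : ∀ (z : Fin n → ℂ) (v : Fin r → ℂ) (l : ℂ), G (z, l • v) = ‖l‖ ^ 2 * G (z, v)) :
    ∀ c : ℂ, fderiv ℝ (cx G) (z, w) ((0, c • w) : Dom n r)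
      = (c + (starRingEnd ℂ) c) * (G (z, w) : ℂ) := by
  intro c
  set L := fderiv ℝ (cx G) (z, w)
  have hpt : ((z, (1:ℂ) • w) : Dom n r) = (z, w) := by simp
  have hg1 : HasFDerivAt (cx G) L ((z, (1:ℂ) • w) : Dom n r) := by
    rw [hpt]; exact hd.hasFDerivAt
  have h1 : HasFDerivAt (fun c : ℂ => cx G (z, c • w)) (L.comp (flineD w)) 1 :=
    HasFDerivAt.comp (f := fun c : ℂ => ((z, c • w) : Dom n r)) 1 hg1 (hasFDerivAt_fline z w 1)
  have hconj : HasFDerivAt (fun c : ℂ => (starRingEnd ℂ) c)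
      (conjCLE.toContinuousLinearMap) 1 := conjCLE.toContinuousLinearMap.hasFDerivAt
  have hid : HasFDerivAt (fun c : ℂ => c) (ContinuousLinearMap.id ℝ ℂ) 1 :=
    (ContinuousLinearMap.id ℝ ℂ).hasFDerivAt
  have h2 : HasFDerivAt (fun c : ℂ => (c * (starRingEnd ℂ) c) * (G (z, w) : ℂ))
      ((G (z, w) : ℂ) • ((1:ℂ) • conjCLE.toContinuousLinearMap
          + ((starRingEnd ℂ) 1) • ContinuousLinearMap.id ℝ ℂ)) 1 :=
    (hid.mul hconj).mul_const _
  have hfun : (fun c : ℂ => cx G (z, c • w))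
      = fun c : ℂ => (c * (starRingEnd ℂ) c) * (G (z, w) : ℂ) := by
    funext c
    show (G (z, c • w) : ℂ) = _
    rw [hhom z w c, mul_comm c ((starRingEnd ℂ) c), Complex.conj_mul']
    push_cast
    ring
  have huniq := (hfun ▸ h1).unique h2
  have := DFunLike.congr_fun huniq c
  rw [ContinuousLinearMap.comp_apply, flineD_apply] at this
  rw [this]
  simp [ContinuousLinearMap.smulRight_apply, ContinuousLinearMap.add_apply,
    ContinuousLinearMap.smul_apply, conjCLE_apply, smul_eq_mul]
  ring


/-- first-order Euler identities -/
lemma euler_first {G : Dom n r → ℝ} {z : Fin n → ℂ} {w : Fin r → ℂ}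
    (hd : DifferentiableAt ℝ (cx G) (z, w))
    (hhom : ∀ (z : Fin n → ℂ) (v : Fin r → ℂ) (l : ℂ), G (z, l • v) = ‖l‖ ^ 2 * G (z, v)) :
    (∑ l : Fin r, w l * wv l (cx G) (z, w) = (G (z, w) : ℂ)) ∧
      (∑ l : Fin r, (starRingEnd ℂ) (w l) * wvb l (cx G) (z, w) = (G (z, w) : ℂ)) := by
  have hL := fderiv_fiber hd hhom
  have E1 := euler_pair hd.hasFDerivAt w
  have E2 := euler_pair hd.hasFDerivAt (I • w)
  rw [show ((0, w) : Dom n r) = ((0, (1:ℂ) • w) : Dom n r) by simp, hL 1] at E1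
  rw [hL I] at E2
  set S := ∑ l : Fin r, w l * wv l (cx G) (z, w) with hS
  set T := ∑ l : Fin r, (starRingEnd ℂ) (w l) * wvb l (cx G) (z, w) with hT
  have hE1 : S + T = 2 * (G (z, w) : ℂ) := by
    rw [hS, hT, ← Finset.sum_add_distrib, E1]
    norm_num
  have hE2 : I * S - I * T = 0 := by
    have : ∑ l : Fin r, ((I • w) l * wv l (cx G) (z, w)
        + (starRingEnd ℂ) ((I • w) l) * wvb l (cx G) (z, w))
        = ∑ l : Fin r, (I * (w l * wv l (cx G) (z, w))
          - I * ((starRingEnd ℂ) (w l) * wvb l (cx G) (z, w))) := by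
      refine Finset.sum_congr rfl fun l _ => ?_
      simp [Pi.smul_apply, smul_eq_mul, map_mul, Complex.conj_I]
      ring
    rw [this] at E2
    rw [Finset.sum_sub_distrib, ← Finset.mul_sum, ← Finset.mul_sum] at E2
    rw [E2]
    simp [Complex.conj_I]
  have hST : S = T := by
    have h3 : I * (S - T) = 0 := by rw [mul_sub]; exact hE2
    rcases mul_eq_zero.mp h3 with h | h
    · exact absurd h Complex.I_ne_zero
    · exact sub_eq_zero.mp h
  have hSg : S = (G (z, w) : ℂ) := by
    have h2S : S + S = 2 * (G (z, w) : ℂ) := by nth_rewrite 2 [hST]; exact hE1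
    linear_combination h2S / 2
  exact ⟨hSg, hST ▸ hSg⟩


lemma isOpenU : IsOpen {q : Dom n r | q.2 ≠ 0} := by
  have : {q : Dom n r | q.2 ≠ 0} = (Prod.snd ⁻¹' {0})ᶜ := by
    ext q; simp [Set.mem_setOf_eq]
  rw [this]
  exact (isClosed_singleton.preimage continuous_snd).isOpen_compl

/-- second-order Euler identities -/
lemma euler_second {G : Dom n r → ℝ}
    (hg : ∀ q : Dom n r, q.2 ≠ 0 → ContDiffAt ℝ (⊤ : ℕ∞) (cx G) q)
    (hhom : ∀ (z : Fin n → ℂ) (v : Fin r → ℂ) (l : ℂ), G (z, l • v) = ‖l‖ ^ 2 * G (z, v))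
    {z : Fin n → ℂ} {w : Fin r → ℂ} (hw : w ≠ 0) :
    (∀ k : Fin r, ∑ l : Fin r, w l * wvb k (wv l (cx G)) (z, w) = wvb k (cx G) (z, w)) ∧
      (∀ j : Fin r, ∑ k : Fin r, (starRingEnd ℂ) (w k) * wvb k (wv j (cx G)) (z, w)
        = wv j (cx G) (z, w)) := by
  have hmem : {q : Dom n r | q.2 ≠ 0} ∈ nhds ((z, w) : Dom n r) := isOpenU.mem_nhds hw
  have hdiff : ∀ q : Dom n r, q.2 ≠ 0 → DifferentiableAt ℝ (cx G) q :=
    fun q hq => (hg q hq).differentiableAt (by simp)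
  have hdWv : ∀ (l : Fin r) (q : Dom n r), q.2 ≠ 0 → DifferentiableAt ℝ (wv l (cx G)) q := by
    intro l q hq
    rw [wv_eq_Wd]
    exact (contDiffAt_Wd (hg q hq) _ _ _).differentiableAt (by simp)
  have hdWvb : ∀ (l : Fin r) (q : Dom n r), q.2 ≠ 0 → DifferentiableAt ℝ (wvb l (cx G)) q := by
    intro l q hq
    rw [wvb_eq_Wd]
    exact (contDiffAt_Wd (hg q hq) _ _ _).differentiableAt (by simp)
  constructor
  · intro k
    have hev : (fun q : Dom n r => ∑ l : Fin r, q.2 l * wv l (cx G) q) =ᶠ[nhds ((z, w) : Dom n r)]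
        cx G := by
      filter_upwards [hmem] with q hq
      simpa [cx] using (euler_first (hdiff q hq) hhom).1
    have h0 : wvb k (cx G) (z, w)
        = Wd (0, Pi.single k 1) (0, Pi.single k I) I
            (fun q : Dom n r => ∑ l : Fin r, q.2 l * wv l (cx G) q) (z, w) := by
      rw [wvb_eq_Wd]
      exact (Wd_congr hev _ _ _).symm
    rw [h0]
    have h1 := Wd_sum0 (f := fun (l : Fin r) (q : Dom n r) => q.2 l * wv l (cx G) q)
      (p := ((z, w) : Dom n r)) Finset.univ
      (fun l _ => ((hasFDerivAt_coordv l _).differentiableAt).mul (hdWv l (z, w) hw))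
      (0, Pi.single k 1) (0, Pi.single k I) I
    rw [h1]
    refine (Finset.sum_congr rfl fun l _ => ?_).symm
    rw [Wd_mul ((hasFDerivAt_coordv l _).differentiableAt) (hdWv l (z, w) hw),
      ← wvb_eq_Wd, ← wvb_eq_Wd, wvb_coordv]
    ring
  · intro j
    have hev : (fun q : Dom n r => ∑ l : Fin r, (starRingEnd ℂ) (q.2 l) * wvb l (cx G) q)
        =ᶠ[nhds ((z, w) : Dom n r)] cx G := by
      filter_upwards [hmem] with q hq
      simpa [cx] using (euler_first (hdiff q hq) hhom).2
    have h0 : wv j (cx G) (z, w)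
        = Wd (0, Pi.single j 1) (0, Pi.single j I) (-I)
            (fun q : Dom n r => ∑ l : Fin r, (starRingEnd ℂ) (q.2 l) * wvb l (cx G) q) (z, w) := by
      rw [wv_eq_Wd]
      exact (Wd_congr hev _ _ _).symm
    rw [h0]
    have h1 := Wd_sum0 (f := fun (l : Fin r) (q : Dom n r) => (starRingEnd ℂ) (q.2 l) * wvb l (cx G) q)
      (p := ((z, w) : Dom n r)) Finset.univ
      (fun l _ => ((hasFDerivAt_coordv_conj l _).differentiableAt).mul (hdWvb l (z, w) hw))
      (0, Pi.single j 1) (0, Pi.single j I) (-I)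
    rw [h1]
    refine (Finset.sum_congr rfl fun k _ => ?_).symm
    rw [Wd_mul ((hasFDerivAt_coordv_conj k _).differentiableAt) (hdWvb k (z, w) hw),
      ← wv_eq_Wd, ← wv_eq_Wd, wv_coordv_conj]
    have hswap : wv j (wvb k (cx G)) (z, w) = wvb k (wv j (cx G)) (z, w) := by
      rw [wv_eq_Wd, wvb_eq_Wd, wv_eq_Wd, wvb_eq_Wd]
      exact Wd_Wd (hg (z, w) hw) _ _ _ _ _ _
    rw [hswap]
    ring


lemma wv_lg {G : Dom n r → ℝ} (hgq : ∀ q : Dom n r, q.2 ≠ 0 → ContDiffAt ℝ (⊤ : ℕ∞) (cx G) q)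
    (hGpos : ∀ q : Dom n r, q.2 ≠ 0 → 0 < G q) {q : Dom n r} (hq : q.2 ≠ 0) (j : Fin r) :
    wv j (lg G) q = wv j (cx G) q * ((G q : ℂ))⁻¹ := by
  have hd := (hgq q hq).differentiableAt (by simp)
  have hpos := hGpos q hq
  have hslit : ((G q : ℝ) : ℂ) ∈ Complex.slitPlane := Complex.ofReal_mem_slitPlane.2 hpos
  have hlog := Complex.hasDerivAt_log hslit
  have hcomp : HasFDerivAt (lg G)
      (((ContinuousLinearMap.smulRight (1 : ℂ →L[ℂ] ℂ) ((G q : ℂ))⁻¹).restrictScalars ℝ).comp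
        (fderiv ℝ (cx G) q)) q :=
    (hlog.hasFDerivAt.restrictScalars ℝ).comp q hd.hasFDerivAt
  simp only [wv, hcomp.fderiv, ContinuousLinearMap.comp_apply,
    ContinuousLinearMap.coe_restrictScalars', ContinuousLinearMap.smulRight_apply,
    ContinuousLinearMap.one_apply, smul_eq_mul]
  ring

lemma sum_delta (c : Fin r → ℂ) (k : Fin r) :
    (∑ m : Fin r, c m * (if m = k then (1:ℂ) else 0)) = c k := by
  simp [mul_ite, Finset.sum_ite_eq']

end KA
namespace KA
variable {n r : ℕ}
lemma sum_factor (c : ℂ) (x y : Fin r → ℂ) :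
    (∑ j : Fin r, ∑ k : Fin r, c * (x j * y k)) = c * ((∑ j : Fin r, x j) * (∑ k : Fin r, y k)) := by
  rw [Finset.sum_mul_sum, Finset.mul_sum]
  refine Finset.sum_congr rfl fun j _ => ?_
  rw [Finset.mul_sum]

lemma sum_factor2 (c : ℂ) (Mx : Fin r → Fin r → ℂ) (y : Fin r → ℂ) :
    (∑ j : Fin r, ∑ k : Fin r, c * (Mx j k * y k))
      = c * (∑ k : Fin r, (∑ j : Fin r, Mx j k) * y k) := by
  rw [Finset.sum_comm, Finset.mul_sum]
  refine Finset.sum_congr rfl fun k _ => ?_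
  rw [Finset.sum_mul, Finset.mul_sum]
end KA


open KA

/-- Key step in the proof of `c₁(O(1),(h^G)⁻¹) = -Ψ/2π + ω_FS`:
`Σ_{j,k} (∂²log G/∂vʲ∂v̄ᵏ) (Γʲ_{lα} vˡ) (conj Γᵏ_{sβ} vˢ)
  = (1/G²)(G Σ_{k,h} G_{k̄α} G_{hβ̄} G^{k̄h} - G_α G_β̄)`. -/
theorem kobayashi_aikou_mixed_term_identity {n r : ℕ} (G : Dom n r → ℝ)
    (hsm : ContDiffOn ℝ (⊤ : ℕ∞) (cx G) {p : Dom n r | p.2 ≠ 0})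
    (hhom : ∀ (z : Fin n → ℂ) (v : Fin r → ℂ) (l : ℂ), G (z, l • v) = ‖l‖ ^ 2 * G (z, v))
    (hGpos : ∀ p : Dom n r, p.2 ≠ 0 → 0 < G p)
    (hpos : ∀ p : Dom n r, p.2 ≠ 0 → (Gmat G p).PosDef) :
    ∀ (z : Fin n → ℂ) (v : Fin r → ℂ), v ≠ 0 → ∀ (a b : Fin n),
      (∑ j : Fin r, ∑ k : Fin r,
          wvb k (wv j (lg G)) (z, v) * (∑ l : Fin r, Gam G j l a (z, v) * v l) *
            (starRingEnd ℂ) (∑ s : Fin r, Gam G k s b (z, v) * v s)) =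
        (1 / (G (z, v) : ℂ) ^ 2) *
          ((G (z, v) : ℂ) *
              (∑ k : Fin r, ∑ h : Fin r,
                wz a (wvb k (cx G)) (z, v) * wzb b (wv h (cx G)) (z, v) *
                  (Gmat G (z, v))⁻¹ k h) -
            wz a (cx G) (z, v) * wzb b (cx G) (z, v)) := by
  intro z v hv a b
  have hgq : ∀ q : Dom n r, q.2 ≠ 0 → ContDiffAt ℝ (⊤ : ℕ∞) (cx G) q :=
    fun q hq => hsm.contDiffAt (isOpenU.mem_nhds hq)
  have hdg : ∀ q : Dom n r, q.2 ≠ 0 → DifferentiableAt ℝ (cx G) q :=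
    fun q hq => (hgq q hq).differentiableAt (by simp)
  have hdWv : ∀ (l : Fin r) (q : Dom n r), q.2 ≠ 0 → DifferentiableAt ℝ (wv l (cx G)) q := by
    intro l q hq; rw [wv_eq_Wd]
    exact (contDiffAt_Wd (hgq q hq) _ _ _).differentiableAt (by simp)
  have hdWvb : ∀ (l : Fin r) (q : Dom n r), q.2 ≠ 0 → DifferentiableAt ℝ (wvb l (cx G)) q := by
    intro l q hq; rw [wvb_eq_Wd]
    exact (contDiffAt_Wd (hgq q hq) _ _ _).differentiableAt (by simp)
  have hdGmat : ∀ (l m : Fin r) (q : Dom n r), q.2 ≠ 0 →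
      DifferentiableAt ℝ (fun q' => Gmat G q' l m) q := by
    intro l m q hq
    have he : (fun q' => Gmat G q' l m) = wvb m (wv l (cx G)) := rfl
    rw [he, wvb_eq_Wd, wv_eq_Wd]
    exact (contDiffAt_Wd (contDiffAt_Wd (hgq q hq) _ _ _) _ _ _).differentiableAt (by simp)
  have hgne : ∀ q : Dom n r, q.2 ≠ 0 → (G q : ℂ) ≠ 0 :=
    fun q hq => Complex.ofReal_ne_zero.2 (hGpos q hq).ne'
  have hmemU : {q : Dom n r | q.2 ≠ 0} ∈ nhds ((z, v) : Dom n r) := isOpenU.mem_nhds hv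
  -- matrix facts
  set M : Matrix (Fin r) (Fin r) ℂ := Gmat G (z, v) with hMdef
  have hPD := hpos (z, v) hv
  have hdet : IsUnit M.det := (Matrix.isUnit_iff_isUnit_det M).mp hPD.isUnit
  have hNM : ∀ m k : Fin r, (∑ j : Fin r, M⁻¹ m j * M j k) = if m = k then (1:ℂ) else 0 := by
    intro m k
    rw [← Matrix.mul_apply, Matrix.nonsing_inv_mul M hdet, Matrix.one_apply]
  have hMN : ∀ l h : Fin r, (∑ k : Fin r, M l k * M⁻¹ k h) = if l = h then (1:ℂ) else 0 := by
    intro l h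
    rw [← Matrix.mul_apply, Matrix.mul_nonsing_inv M hdet, Matrix.one_apply]
  have hNherm : ∀ h k : Fin r, (starRingEnd ℂ) (M⁻¹ h k) = M⁻¹ k h := by
    intro h k
    exact hPD.isHermitian.inv.apply k h
  have hMapp : ∀ l k : Fin r, M l k = wvb k (wv l (cx G)) (z, v) := fun l k => rfl
  -- Euler identities at (z, v)
  have hE2 := euler_second hgq hhom (z := z) (w := v) hv
  have hGkb : ∀ k : Fin r, wvb k (cx G) (z, v) = ∑ l : Fin r, v l * M l k :=
    fun k => ((hE2.1 k).symm)
  have hGj : ∀ j : Fin r, wv j (cx G) (z, v) = ∑ k : Fin r, (starRingEnd ℂ) (v k) * M j k :=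
    fun j => ((hE2.2 j).symm)
  -- step 1 : second derivative of log
  have hstep1 : ∀ j k : Fin r, wvb k (wv j (lg G)) (z, v)
      = M j k * ((G (z, v) : ℂ))⁻¹
        + wv j (cx G) (z, v) * (-(wvb k (cx G) (z, v)) / (G (z, v) : ℂ) ^ 2) := by
    intro j k
    have hev : wv j (lg G) =ᶠ[nhds ((z, v) : Dom n r)]
        fun q => wv j (cx G) q * (fun q' : Dom n r => ((G q' : ℂ))⁻¹) q := by
      filter_upwards [hmemU] with q hq
      exact wv_lg hgq hGpos hq j
    have hdinv : DifferentiableAt ℝ (fun q' : Dom n r => ((G q' : ℂ))⁻¹) (z, v) := by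
      exact (hdg (z, v) hv).inv (hgne (z, v) hv)
    have hWB : Wd (0, Pi.single k 1) (0, Pi.single k I) I
        (fun q' : Dom n r => ((G q' : ℂ))⁻¹) (z, v)
        = -(wvb k (cx G) (z, v)) / (G (z, v) : ℂ) ^ 2 :=
      Wd_inv (hdg (z, v) hv) (hgne (z, v) hv) _ _ _
    rw [wvb_eq_Wd, Wd_congr hev, Wd_mul (hdWv j (z, v) hv) hdinv, hWB,
      ← wvb_eq_Wd, ← hMapp]
  -- slice identities
  have hZa : ∀ (c : Fin n) (m : Fin r),
      (∑ l : Fin r, v l * wz c (fun q => Gmat G q l m) (z, v)) = wz c (wvb m (cx G)) (z, v) := by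
    intro c m
    have h1 := Wd_sum (f := fun (l : Fin r) (q : Dom n r) => Gmat G q l m)
      (p := ((z, v) : Dom n r)) Finset.univ v
      (fun l _ => hdGmat l m (z, v) hv)
      (Pi.single c 1, 0) (Pi.single c I, 0) (-I)
    have hds : DifferentiableAt ℝ (fun q : Dom n r => ∑ l : Fin r, v l * Gmat G q l m) (z, v) :=
      DifferentiableAt.fun_sum fun l _ => (hdGmat l m (z, v) hv).const_mul (v l)
    have h2 := Wd_slice hds (hdWvb m (z, v) hv)
      (fun z' => by simpa [Gmat] using (euler_second hgq hhom (z := z') (w := v) hv).1 m)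
      (Pi.single c 1) (Pi.single c I) (-I)
    simp only [wz_eq_Wd]
    rw [← h1, h2]
  have hFa : ∀ c : Fin n,
      (∑ m : Fin r, (starRingEnd ℂ) (v m) * wz c (wvb m (cx G)) (z, v)) = wz c (cx G) (z, v) := by
    intro c
    have h1 := Wd_sum (f := fun (m : Fin r) (q : Dom n r) => wvb m (cx G) q)
      (p := ((z, v) : Dom n r)) Finset.univ (fun m => (starRingEnd ℂ) (v m))
      (fun m _ => hdWvb m (z, v) hv)
      (Pi.single c 1, 0) (Pi.single c I, 0) (-I)
    have hds : DifferentiableAt ℝ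
        (fun q : Dom n r => ∑ m : Fin r, (starRingEnd ℂ) (v m) * wvb m (cx G) q) (z, v) :=
      DifferentiableAt.fun_sum fun m _ => (hdWvb m (z, v) hv).const_mul _
    have h2 := Wd_slice hds (hdg (z, v) hv)
      (fun z' => by simpa [cx] using (euler_first (hdg (z', v) hv) hhom).2)
      (Pi.single c 1) (Pi.single c I) (-I)
    simp only [wz_eq_Wd]
    rw [← h1, h2]
  -- conjugation facts
  have hconjreal : (fun q : Dom n r => (starRingEnd ℂ) (cx G q)) = cx G :=
    funext fun q => Complex.conj_ofReal _
  have hnegI : (starRingEnd ℂ) (-I) = I := by simp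
  have hconj_wvb : ∀ (h : Fin r),
      (starRingEnd ℂ) (wz b (wvb h (cx G)) (z, v)) = wzb b (wv h (cx G)) (z, v) := by
    intro h
    rw [wz_eq_Wd, wzb_eq_Wd, Wd_conj (hdWvb h (z, v) hv), hnegI]
    refine Wd_congr ?_ _ _ _
    filter_upwards [hmemU] with q hq
    rw [wvb_eq_Wd, wv_eq_Wd, Wd_conj (hdg q hq), hconjreal]
    simp
  have hconj_g : (starRingEnd ℂ) (wz b (cx G) (z, v)) = wzb b (cx G) (z, v) := by
    rw [wz_eq_Wd, wzb_eq_Wd, Wd_conj (hdg (z, v) hv), hnegI, hconjreal]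
  -- the coefficient sums
  have hA : ∀ (j : Fin r), (∑ l : Fin r, Gam G j l a (z, v) * v l)
      = ∑ m : Fin r, wz a (wvb m (cx G)) (z, v) * M⁻¹ m j := by
    intro j
    simp only [Gam, ← hMdef, Finset.sum_mul]
    rw [Finset.sum_comm]
    refine Finset.sum_congr rfl fun m _ => ?_
    rw [← hZa a m, Finset.sum_mul]
    exact Finset.sum_congr rfl fun l _ => by ring
  have hB : ∀ (k : Fin r), (starRingEnd ℂ) (∑ s : Fin r, Gam G k s b (z, v) * v s)
      = ∑ h : Fin r, wzb b (wv h (cx G)) (z, v) * M⁻¹ k h := by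
    intro k
    rw [show (∑ s : Fin r, Gam G k s b (z, v) * v s)
        = ∑ h : Fin r, wz b (wvb h (cx G)) (z, v) * M⁻¹ h k from by
      simp only [Gam, ← hMdef, Finset.sum_mul]
      rw [Finset.sum_comm]
      refine Finset.sum_congr rfl fun m _ => ?_
      rw [← hZa b m, Finset.sum_mul]
      exact Finset.sum_congr rfl fun l _ => by ring]
    rw [map_sum]
    refine Finset.sum_congr rfl fun h _ => ?_
    rw [map_mul, hconj_wvb h, hNherm]
  -- final assembly
  set gp : ℂ := (G (z, v) : ℂ) with hgp
  have hgpne : gp ≠ 0 := hgne (z, v) hv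
  have hMA : ∀ k : Fin r,
      (∑ j : Fin r, M j k * (∑ m : Fin r, wz a (wvb m (cx G)) (z, v) * M⁻¹ m j))
        = wz a (wvb k (cx G)) (z, v) := by
    intro k
    have h1 : ∀ j, M j k * (∑ m : Fin r, wz a (wvb m (cx G)) (z, v) * M⁻¹ m j)
        = ∑ m : Fin r, wz a (wvb m (cx G)) (z, v) * (M⁻¹ m j * M j k) := by
      intro j; rw [Finset.mul_sum]
      exact Finset.sum_congr rfl fun m _ => by ring
    rw [Finset.sum_congr rfl fun j _ => h1 j, Finset.sum_comm]
    have h2 : ∀ m, (∑ j : Fin r, wz a (wvb m (cx G)) (z, v) * (M⁻¹ m j * M j k))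
        = wz a (wvb m (cx G)) (z, v) * (if m = k then (1:ℂ) else 0) := by
      intro m; rw [← Finset.mul_sum, hNM m k]
    rw [Finset.sum_congr rfl fun m _ => h2 m]
    exact sum_delta _ k
  have hNwv : ∀ m : Fin r, (∑ j : Fin r, M⁻¹ m j * wv j (cx G) (z, v))
      = (starRingEnd ℂ) (v m) := by
    intro m
    have h1 : ∀ j, M⁻¹ m j * wv j (cx G) (z, v)
        = ∑ kk : Fin r, (starRingEnd ℂ) (v kk) * (M⁻¹ m j * M j kk) := by
      intro j; rw [hGj j, Finset.mul_sum]
      exact Finset.sum_congr rfl fun kk _ => by ring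
    rw [Finset.sum_congr rfl fun j _ => h1 j, Finset.sum_comm]
    have h2 : ∀ kk, (∑ j : Fin r, (starRingEnd ℂ) (v kk) * (M⁻¹ m j * M j kk))
        = (starRingEnd ℂ) (v kk) * (if m = kk then (1:ℂ) else 0) := by
      intro kk; rw [← Finset.mul_sum, hNM m kk]
    rw [Finset.sum_congr rfl fun kk _ => h2 kk]
    have h3 : ∀ kk : Fin r, (starRingEnd ℂ) (v kk) * (if m = kk then (1:ℂ) else 0)
        = (starRingEnd ℂ) (v kk) * (if kk = m then (1:ℂ) else 0) := by
      intro kk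
      by_cases h : kk = m
      · subst h; simp
      · have h' : ¬(m = kk) := fun hh => h hh.symm
        simp [h, h']
    rw [Finset.sum_congr rfl fun kk _ => h3 kk]
    exact sum_delta _ m
  have hNwvb : ∀ h : Fin r, (∑ k : Fin r, wvb k (cx G) (z, v) * M⁻¹ k h) = v h := by
    intro h
    have h1 : ∀ k, wvb k (cx G) (z, v) * M⁻¹ k h
        = ∑ l : Fin r, v l * (M l k * M⁻¹ k h) := by
      intro k; rw [hGkb k, Finset.sum_mul]
      exact Finset.sum_congr rfl fun l _ => by ring
    rw [Finset.sum_congr rfl fun k _ => h1 k, Finset.sum_comm]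
    have h2 : ∀ l, (∑ k : Fin r, v l * (M l k * M⁻¹ k h))
        = v l * (if l = h then (1:ℂ) else 0) := by
      intro l; rw [← Finset.mul_sum, hMN l h]
    rw [Finset.sum_congr rfl fun l _ => h2 l]
    exact sum_delta v h
  have hS2 : (∑ j : Fin r, wv j (cx G) (z, v) * (∑ m : Fin r, wz a (wvb m (cx G)) (z, v) * M⁻¹ m j))
      = wz a (cx G) (z, v) := by
    have h1 : ∀ j, wv j (cx G) (z, v) * (∑ m : Fin r, wz a (wvb m (cx G)) (z, v) * M⁻¹ m j)
        = ∑ m : Fin r, wz a (wvb m (cx G)) (z, v) * (M⁻¹ m j * wv j (cx G) (z, v)) := by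
      intro j; rw [Finset.mul_sum]
      exact Finset.sum_congr rfl fun m _ => by ring
    rw [Finset.sum_congr rfl fun j _ => h1 j, Finset.sum_comm]
    have h2 : ∀ m, (∑ j : Fin r, wz a (wvb m (cx G)) (z, v) * (M⁻¹ m j * wv j (cx G) (z, v)))
        = (starRingEnd ℂ) (v m) * wz a (wvb m (cx G)) (z, v) := by
      intro m; rw [← Finset.mul_sum, hNwv m]; ring
    rw [Finset.sum_congr rfl fun m _ => h2 m]
    exact hFa a
  have hS3 : (∑ k : Fin r, wvb k (cx G) (z, v) * (∑ h : Fin r, wzb b (wv h (cx G)) (z, v) * M⁻¹ k h))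
      = wzb b (cx G) (z, v) := by
    have h1 : ∀ k, wvb k (cx G) (z, v) * (∑ h : Fin r, wzb b (wv h (cx G)) (z, v) * M⁻¹ k h)
        = ∑ h : Fin r, wzb b (wv h (cx G)) (z, v) * (wvb k (cx G) (z, v) * M⁻¹ k h) := by
      intro k; rw [Finset.mul_sum]
      exact Finset.sum_congr rfl fun h _ => by ring
    rw [Finset.sum_congr rfl fun k _ => h1 k, Finset.sum_comm]
    have h2 : ∀ h, (∑ k : Fin r, wzb b (wv h (cx G)) (z, v) * (wvb k (cx G) (z, v) * M⁻¹ k h))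
        = wzb b (wv h (cx G)) (z, v) * v h := by
      intro h; rw [← Finset.mul_sum, hNwvb h]
    rw [Finset.sum_congr rfl fun h _ => h2 h]
    have h3 : ∀ h, wzb b (wv h (cx G)) (z, v) * v h
        = (starRingEnd ℂ) ((starRingEnd ℂ) (v h) * wz b (wvb h (cx G)) (z, v)) := by
      intro h
      rw [map_mul, Complex.conj_conj, hconj_wvb h]
      ring
    rw [Finset.sum_congr rfl fun h _ => h3 h, ← map_sum, hFa b, hconj_g]
  have hLHS : (∑ j : Fin r, ∑ k : Fin r,
      wvb k (wv j (lg G)) (z, v) * (∑ l : Fin r, Gam G j l a (z, v) * v l) *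
        (starRingEnd ℂ) (∑ s : Fin r, Gam G k s b (z, v) * v s))
      = ∑ j : Fin r, ∑ k : Fin r,
        (gp⁻¹ * (M j k * (∑ m : Fin r, wz a (wvb m (cx G)) (z, v) * M⁻¹ m j)
            * (∑ h : Fin r, wzb b (wv h (cx G)) (z, v) * M⁻¹ k h))
          + (-(1/gp^2)) * ((wv j (cx G) (z, v) * (∑ m : Fin r, wz a (wvb m (cx G)) (z, v) * M⁻¹ m j))
              * (wvb k (cx G) (z, v) * (∑ h : Fin r, wzb b (wv h (cx G)) (z, v) * M⁻¹ k h)))) := by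
    refine Finset.sum_congr rfl fun j _ => Finset.sum_congr rfl fun k _ => ?_
    rw [hstep1 j k, hA j, hB k]
    ring
  rw [hLHS]
  have hsplit : (∑ j : Fin r, ∑ k : Fin r,
      (gp⁻¹ * (M j k * (∑ m : Fin r, wz a (wvb m (cx G)) (z, v) * M⁻¹ m j)
          * (∑ h : Fin r, wzb b (wv h (cx G)) (z, v) * M⁻¹ k h))
        + (-(1/gp^2)) * ((wv j (cx G) (z, v) * (∑ m : Fin r, wz a (wvb m (cx G)) (z, v) * M⁻¹ m j))
            * (wvb k (cx G) (z, v) * (∑ h : Fin r, wzb b (wv h (cx G)) (z, v) * M⁻¹ k h)))))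
      = gp⁻¹ * (∑ k : Fin r,
            (∑ j : Fin r, M j k * (∑ m : Fin r, wz a (wvb m (cx G)) (z, v) * M⁻¹ m j))
            * (∑ h : Fin r, wzb b (wv h (cx G)) (z, v) * M⁻¹ k h))
        + (-(1/gp^2)) * ((∑ j : Fin r, wv j (cx G) (z, v)
              * (∑ m : Fin r, wz a (wvb m (cx G)) (z, v) * M⁻¹ m j))
            * (∑ k : Fin r, wvb k (cx G) (z, v)
              * (∑ h : Fin r, wzb b (wv h (cx G)) (z, v) * M⁻¹ k h))) := by
    have hT1 : (∑ j : Fin r, ∑ k : Fin r, gp⁻¹ * (M j k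
          * (∑ m : Fin r, wz a (wvb m (cx G)) (z, v) * M⁻¹ m j)
          * (∑ h : Fin r, wzb b (wv h (cx G)) (z, v) * M⁻¹ k h)))
        = gp⁻¹ * (∑ k : Fin r,
            (∑ j : Fin r, M j k * (∑ m : Fin r, wz a (wvb m (cx G)) (z, v) * M⁻¹ m j))
            * (∑ h : Fin r, wzb b (wv h (cx G)) (z, v) * M⁻¹ k h)) :=
      sum_factor2 gp⁻¹
        (fun j k => M j k * (∑ m : Fin r, wz a (wvb m (cx G)) (z, v) * M⁻¹ m j))
        (fun k => ∑ h : Fin r, wzb b (wv h (cx G)) (z, v) * M⁻¹ k h)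
    have hT2 : (∑ j : Fin r, ∑ k : Fin r, (-(1/gp^2))
          * ((wv j (cx G) (z, v) * (∑ m : Fin r, wz a (wvb m (cx G)) (z, v) * M⁻¹ m j))
            * (wvb k (cx G) (z, v) * (∑ h : Fin r, wzb b (wv h (cx G)) (z, v) * M⁻¹ k h))))
        = (-(1/gp^2)) * ((∑ j : Fin r, wv j (cx G) (z, v)
              * (∑ m : Fin r, wz a (wvb m (cx G)) (z, v) * M⁻¹ m j))
            * (∑ k : Fin r, wvb k (cx G) (z, v)
              * (∑ h : Fin r, wzb b (wv h (cx G)) (z, v) * M⁻¹ k h))) :=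
      sum_factor (-(1/gp^2))
        (fun j => wv j (cx G) (z, v) * (∑ m : Fin r, wz a (wvb m (cx G)) (z, v) * M⁻¹ m j))
        (fun k => wvb k (cx G) (z, v) * (∑ h : Fin r, wzb b (wv h (cx G)) (z, v) * M⁻¹ k h))
    have hsp : ∀ j : Fin r, (∑ k : Fin r,
        (gp⁻¹ * (M j k * (∑ m : Fin r, wz a (wvb m (cx G)) (z, v) * M⁻¹ m j)
            * (∑ h : Fin r, wzb b (wv h (cx G)) (z, v) * M⁻¹ k h))
          + (-(1/gp^2)) * ((wv j (cx G) (z, v) * (∑ m : Fin r, wz a (wvb m (cx G)) (z, v) * M⁻¹ m j))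
              * (wvb k (cx G) (z, v) * (∑ h : Fin r, wzb b (wv h (cx G)) (z, v) * M⁻¹ k h)))))
        = (∑ k : Fin r, gp⁻¹ * (M j k * (∑ m : Fin r, wz a (wvb m (cx G)) (z, v) * M⁻¹ m j)
            * (∑ h : Fin r, wzb b (wv h (cx G)) (z, v) * M⁻¹ k h)))
          + (∑ k : Fin r, (-(1/gp^2)) * ((wv j (cx G) (z, v)
              * (∑ m : Fin r, wz a (wvb m (cx G)) (z, v) * M⁻¹ m j))
              * (wvb k (cx G) (z, v) * (∑ h : Fin r, wzb b (wv h (cx G)) (z, v) * M⁻¹ k h)))) :=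
      fun j => Finset.sum_add_distrib
    rw [Finset.sum_congr rfl fun j (_ : j ∈ Finset.univ) => hsp j, Finset.sum_add_distrib, hT1, hT2]
  rw [hsplit, Finset.sum_congr rfl fun k (_ : k ∈ Finset.univ) => by rw [hMA k], hS2, hS3]
  have hD : (∑ k : Fin r, wz a (wvb k (cx G)) (z, v)
        * (∑ h : Fin r, wzb b (wv h (cx G)) (z, v) * M⁻¹ k h))
      = ∑ k : Fin r, ∑ h : Fin r,
          wz a (wvb k (cx G)) (z, v) * wzb b (wv h (cx G)) (z, v) * M⁻¹ k h := by
    refine Finset.sum_congr rfl fun k _ => ?_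
    rw [Finset.mul_sum]
    exact Finset.sum_congr rfl fun h _ => by ring
  rw [hD]
  field_simp
  ring
end
end

section
/- Let E' ⊂ E be a holomorphic subbundle with induced Finsler metric G|_{E'}, and in adapted local coordinates with indices 1≤i,j,k,l≤r' (for E') and r'<a,b≤r, at a point where G_{i j̄ α} = 0 for the induced metric, the difference tensor T_{i j̄ α β̄} = K_{i j̄ α β̄} − K'_{i j̄ α β̄} satisfies g^{αβ̄} T_{i j̄ α β̄} v^i v̄^j / G = (1/G) g^{αβ̄} G^{b ā} (G_{i ā α} v^i)(G_{j b̄ β} v^j)‾ ≥ 0 for v ∈ E' \ {0}. -/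
open Complex
open scoped ComplexOrder

noncomputable section

/-- The Kobayashi curvature tensor of a Finsler metric in local coordinates. -/
def KobT {n r : ℕ} (G : Dom n r → ℝ) (i j : Fin r) (a b : Fin n) (p : Dom n r) : ℂ :=
  -(wzb b (wz a fun q => Gmat G q i j) p) +
    ∑ k : Fin r, ∑ l : Fin r,
      (Gmat G p)⁻¹ l k * wz a (fun q => Gmat G q i l) p * wzb b (fun q => Gmat G q k j) p

/-! ### congruence lemmas -/

theorem wv_congr {n r : ℕ} {i : Fin r} {f g : Dom n r → ℂ} {p : Dom n r}
    (h : f =ᶠ[nhds p] g) : wv i f p = wv i g p := by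
  simp only [wv, h.fderiv_eq]

theorem wvb_congr {n r : ℕ} {i : Fin r} {f g : Dom n r → ℂ} {p : Dom n r}
    (h : f =ᶠ[nhds p] g) : wvb i f p = wvb i g p := by
  simp only [wvb, h.fderiv_eq]

theorem wz_congr {n r : ℕ} {a : Fin n} {f g : Dom n r → ℂ} {p : Dom n r}
    (h : f =ᶠ[nhds p] g) : wz a f p = wz a g p := by
  simp only [wz, h.fderiv_eq]

theorem wzb_congr {n r : ℕ} {a : Fin n} {f g : Dom n r → ℂ} {p : Dom n r}
    (h : f =ᶠ[nhds p] g) : wzb a f p = wzb a g p := by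
  simp only [wzb, h.fderiv_eq]

/-! ### conjugation -/

theorem fderiv_conj_apply {n r : ℕ} (g : Dom n r → ℂ) (p : Dom n r) (v : Dom n r) :
    fderiv ℝ (fun q => (starRingEnd ℂ) (g q)) p v = (starRingEnd ℂ) (fderiv ℝ g p v) := by
  have : (fun q => (starRingEnd ℂ) (g q)) = (Complex.conjCLE : ℂ → ℂ) ∘ g := rfl
  rw [this, ContinuousLinearEquiv.comp_fderiv]
  rfl

theorem wzb_conj {n r : ℕ} (a : Fin n) (g : Dom n r → ℂ) (p : Dom n r) :
    wzb a (fun q => (starRingEnd ℂ) (g q)) p = (starRingEnd ℂ) (wz a g p) := by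
  simp only [wzb, wz, fderiv_conj_apply, map_div₀, map_sub, map_mul, Complex.conj_I, map_ofNat]
  ring

/-! ### the inclusion map -/

def Lmap (n rp s : ℕ) : Dom n rp →L[ℝ] Dom n (rp + s) :=
  LinearMap.toContinuousLinearMap <|
    LinearMap.prodMap LinearMap.id
      { toFun := fun w => Fin.append w 0
        map_add' := by
          intro x y; funext j
          refine Fin.addCases (fun i => ?_) (fun i => ?_) j <;>
            simp [Fin.append_left, Fin.append_right]
        map_smul' := by
          intro c x; funext j
          refine Fin.addCases (fun i => ?_) (fun i => ?_) j <;>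
            simp [Fin.append_left, Fin.append_right] }

@[simp] theorem Lmap_apply {n rp s : ℕ} (p : Dom n rp) :
    Lmap n rp s p = (p.1, Fin.append p.2 0) := rfl

theorem append_single {rp s : ℕ} (i : Fin rp) (c : ℂ) :
    Fin.append (Pi.single i c) (0 : Fin s → ℂ) = Pi.single (Fin.castAdd s i) c := by
  funext j
  refine Fin.addCases (fun k => ?_) (fun k => ?_) j
  · rw [Fin.append_left]
    rcases eq_or_ne k i with rfl | hk
    · simp
    · rw [Pi.single_eq_of_ne hk, Pi.single_eq_of_ne]
      simpa [Fin.ext_iff] using hk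
  · rw [Fin.append_right, Pi.single_eq_of_ne]
    · simp
    · simp only [ne_eq, Fin.ext_iff, Fin.coe_natAdd, Fin.coe_castAdd]
      omega

theorem Lmap_snd_ne_zero {n rp s : ℕ} {p : Dom n rp} (h : p.2 ≠ 0) :
    ((Lmap n rp s) p).2 ≠ 0 := by
  intro hz
  apply h
  funext i
  have := congrFun hz (Fin.castAdd s i)
  simpa [Fin.append_left] using this

/-! ### composition with `Lmap` -/

theorem fderiv_comp_Lmap {n rp s : ℕ} {f : Dom n (rp + s) → ℂ} {p : Dom n rp}
    (hf : DifferentiableAt ℝ f (Lmap n rp s p)) (v : Dom n rp) :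
    fderiv ℝ (fun q => f (Lmap n rp s q)) p v = fderiv ℝ f (Lmap n rp s p) (Lmap n rp s v) := by
  have h := fderiv_comp (x := p) hf (Lmap n rp s).differentiableAt
  rw [show (fun q => f (Lmap n rp s q)) = f ∘ (Lmap n rp s) from rfl, h,
    (Lmap n rp s).fderiv]
  rfl

theorem Lmap_single_v {n rp s : ℕ} (i : Fin rp) (c : ℂ) :
    Lmap n rp s ((0 : Fin n → ℂ), Pi.single i c) = (0, Pi.single (Fin.castAdd s i) c) := by
  rw [Lmap_apply, append_single]

theorem append_zero_zero {rp s : ℕ} :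
    Fin.append (0 : Fin rp → ℂ) (0 : Fin s → ℂ) = 0 := by
  funext j
  exact Fin.addCases (fun k => by simp [Fin.append_left]) (fun k => by simp [Fin.append_right]) j

theorem Lmap_single_z {n rp s : ℕ} (a : Fin n) (c : ℂ) :
    Lmap n rp s ((Pi.single a c : Fin n → ℂ), 0) = (Pi.single a c, 0) := by
  rw [Lmap_apply, append_zero_zero]

theorem wv_comp_Lmap {n rp s : ℕ} {f : Dom n (rp + s) → ℂ} {p : Dom n rp} (i : Fin rp)
    (hf : DifferentiableAt ℝ f (Lmap n rp s p)) :
    wv i (fun q => f (Lmap n rp s q)) p = wv (Fin.castAdd s i) f (Lmap n rp s p) := by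
  simp only [wv, fderiv_comp_Lmap hf, Lmap_single_v]

theorem wvb_comp_Lmap {n rp s : ℕ} {f : Dom n (rp + s) → ℂ} {p : Dom n rp} (i : Fin rp)
    (hf : DifferentiableAt ℝ f (Lmap n rp s p)) :
    wvb i (fun q => f (Lmap n rp s q)) p = wvb (Fin.castAdd s i) f (Lmap n rp s p) := by
  simp only [wvb, fderiv_comp_Lmap hf, Lmap_single_v]

theorem wz_comp_Lmap {n rp s : ℕ} {f : Dom n (rp + s) → ℂ} {p : Dom n rp} (a : Fin n)
    (hf : DifferentiableAt ℝ f (Lmap n rp s p)) :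
    wz a (fun q => f (Lmap n rp s q)) p = wz a f (Lmap n rp s p) := by
  simp only [wz, fderiv_comp_Lmap hf, Lmap_single_z]

theorem wzb_comp_Lmap {n rp s : ℕ} {f : Dom n (rp + s) → ℂ} {p : Dom n rp} (a : Fin n)
    (hf : DifferentiableAt ℝ f (Lmap n rp s p)) :
    wzb a (fun q => f (Lmap n rp s q)) p = wzb a f (Lmap n rp s p) := by
  simp only [wzb, fderiv_comp_Lmap hf, Lmap_single_z]

/-! ### smoothness helpers -/

theorem contDiffOn_wv {n r : ℕ} {f : Dom n r → ℂ} {s : Set (Dom n r)} (hs : IsOpen s)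
    (hf : ContDiffOn ℝ (⊤ : ℕ∞) f s) (i : Fin r) : ContDiffOn ℝ (⊤ : ℕ∞) (wv i f) s := by
  have hd : ContDiffOn ℝ (⊤ : ℕ∞) (fderiv ℝ f) s := by
    apply hf.fderiv_of_isOpen hs
    exact_mod_cast le_refl _
  unfold wv
  apply ContDiffOn.div_const
  apply ContDiffOn.sub
  · exact hd.clm_apply contDiffOn_const
  · exact contDiffOn_const.mul (hd.clm_apply contDiffOn_const)

theorem contDiffOn_wvb {n r : ℕ} {f : Dom n r → ℂ} {s : Set (Dom n r)} (hs : IsOpen s)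
    (hf : ContDiffOn ℝ (⊤ : ℕ∞) f s) (i : Fin r) : ContDiffOn ℝ (⊤ : ℕ∞) (wvb i f) s := by
  have hd : ContDiffOn ℝ (⊤ : ℕ∞) (fderiv ℝ f) s := by
    apply hf.fderiv_of_isOpen hs
    exact_mod_cast le_refl _
  unfold wvb
  apply ContDiffOn.div_const
  apply ContDiffOn.add
  · exact hd.clm_apply contDiffOn_const
  · exact contDiffOn_const.mul (hd.clm_apply contDiffOn_const)

theorem contDiffOn_wz {n r : ℕ} {f : Dom n r → ℂ} {s : Set (Dom n r)} (hs : IsOpen s)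
    (hf : ContDiffOn ℝ (⊤ : ℕ∞) f s) (a : Fin n) : ContDiffOn ℝ (⊤ : ℕ∞) (wz a f) s := by
  have hd : ContDiffOn ℝ (⊤ : ℕ∞) (fderiv ℝ f) s := by
    apply hf.fderiv_of_isOpen hs
    exact_mod_cast le_refl _
  unfold wz
  apply ContDiffOn.div_const
  apply ContDiffOn.sub
  · exact hd.clm_apply contDiffOn_const
  · exact contDiffOn_const.mul (hd.clm_apply contDiffOn_const)

theorem sum4_comm {ι κ : Type*} [Fintype ι] [Fintype κ] (F : ι → ι → κ → κ → ℂ) :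
    ∑ i, ∑ j, ∑ c, ∑ d, F i j c d = ∑ c, ∑ d, ∑ i, ∑ j, F i j c d := by
  calc ∑ i, ∑ j, ∑ c, ∑ d, F i j c d
      = ∑ i, ∑ c, ∑ j, ∑ d, F i j c d :=
        Finset.sum_congr rfl fun i _ => Finset.sum_comm
    _ = ∑ c, ∑ i, ∑ j, ∑ d, F i j c d := Finset.sum_comm
    _ = ∑ c, ∑ i, ∑ d, ∑ j, F i j c d :=
        Finset.sum_congr rfl fun c _ => Finset.sum_congr rfl fun i _ => Finset.sum_comm
    _ = ∑ c, ∑ d, ∑ i, ∑ j, F i j c d :=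
        Finset.sum_congr rfl fun c _ => Finset.sum_comm

theorem rearrange {r s : ℕ} (M : Fin s → Fin s → ℂ) (A B : Fin r → Fin s → ℂ) (w : Fin r → ℂ) :
    ∑ i, ∑ j, (∑ c, ∑ d, M c d * A i c * (starRingEnd ℂ) (B j d)) * w i * (starRingEnd ℂ) (w j)
      = ∑ c, ∑ d, M c d * (∑ i, A i c * w i) * (starRingEnd ℂ) (∑ j, B j d * w j) := by
  have : ∀ i j, (∑ c, ∑ d, M c d * A i c * (starRingEnd ℂ) (B j d)) * w i * (starRingEnd ℂ) (w j)
      = ∑ c, ∑ d, M c d * A i c * (starRingEnd ℂ) (B j d) * w i * (starRingEnd ℂ) (w j) := by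
    intro i j
    simp [Finset.sum_mul]
  simp only [this]
  rw [sum4_comm]
  refine Finset.sum_congr rfl fun c _ => Finset.sum_congr rfl fun d _ => ?_
  simp only [map_sum, map_mul, Finset.mul_sum, Finset.sum_mul]
  rw [Finset.sum_comm]
  refine Finset.sum_congr rfl fun j _ => Finset.sum_congr rfl fun i _ => ?_
  ring

theorem sum3_comm {ι κ : Type*} [Fintype ι] [Fintype κ] (F : ι → ι → κ → ℂ) :
    ∑ a, ∑ b, ∑ e, F a b e = ∑ e, ∑ a, ∑ b, F a b e :=
  calc ∑ a, ∑ b, ∑ e, F a b e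
      = ∑ a, ∑ e, ∑ b, F a b e := Finset.sum_congr rfl fun a _ => Finset.sum_comm
    _ = ∑ e, ∑ a, ∑ b, F a b e := Finset.sum_comm

theorem pos_aux {n : ℕ} (A Y : Matrix (Fin n) (Fin n) ℂ) (hA : A.PosSemidef)
    (hY : Y.PosSemidef) : 0 ≤ ∑ a, ∑ b, A a b * Y a b := by
  open scoped MatrixOrder in obtain ⟨C, rfl⟩ := CStarAlgebra.nonneg_iff_eq_star_mul_self.mp hA.nonneg
  simp only [Matrix.star_eq_conjTranspose]
  have h : ∑ a, ∑ b, (C.conjTranspose * C) a b * Y a b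
      = ∑ e, dotProduct (star (fun a => C e a)) (Y.mulVec (fun a => C e a)) := by
    simp only [Matrix.mul_apply, Matrix.conjTranspose_apply, dotProduct,
      Matrix.mulVec, Pi.star_apply, Finset.sum_mul, Finset.mul_sum]
    rw [sum3_comm]
    exact Finset.sum_congr rfl fun e _ => Finset.sum_congr rfl fun a _ =>
      Finset.sum_congr rfl fun b _ => by ring
  rw [h]
  exact Finset.sum_nonneg fun e _ => hY.dotProduct_mulVec_nonneg _

/-- Gauss-type curvature-decreasing identity for a holomorphic subbundle `E' ⊂ E`
(of rank `rp` inside rank `rp + s`) with the induced Finsler metric, at a point of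
`E' \ 0` in adapted coordinates where `G'_{i j̄ α} = 0`: the `g`-contraction of the
difference tensor `T = K - K'` against `vⁱv̄ʲ/G` equals
`(1/G) Σ g^{αβ̄} G^{bā} (G_{iāα}vⁱ) (conj (G_{jb̄β}vʲ)) ≥ 0`. -/
theorem finsler_subbundle_curvature_difference {n rp s : ℕ}
    (G : Dom n (rp + s) → ℝ)
    (hsm : ContDiffOn ℝ (⊤ : ℕ∞) (cx G) {p : Dom n (rp + s) | p.2 ≠ 0})
    (hhom : ∀ (z : Fin n → ℂ) (v : Fin (rp + s) → ℂ) (l : ℂ),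
      G (z, l • v) = ‖l‖ ^ 2 * G (z, v))
    (hGpos : ∀ p : Dom n (rp + s), p.2 ≠ 0 → 0 < G p)
    (hpos : ∀ p : Dom n (rp + s), p.2 ≠ 0 → (Gmat G p).PosDef)
    (ginv : Matrix (Fin n) (Fin n) ℂ) (hginv : ginv.PosDef)
    (z₀ : Fin n → ℂ) (w₀ : Fin rp → ℂ) (hw₀ : w₀ ≠ 0)
    (hnormal : ∀ (i j : Fin rp) (a : Fin n),
      wz a (fun q => Gmat (fun q' : Dom n rp => G (q'.1, Fin.append q'.2 0)) q i j)
        (z₀, w₀) = 0) :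
    (∑ a : Fin n, ∑ b : Fin n, ginv a b *
        ∑ i : Fin rp, ∑ j : Fin rp,
          (KobT G (Fin.castAdd s i) (Fin.castAdd s j) a b (z₀, Fin.append w₀ 0) -
              KobT (fun q' : Dom n rp => G (q'.1, Fin.append q'.2 0)) i j a b (z₀, w₀)) *
            w₀ i * (starRingEnd ℂ) (w₀ j)) / (G (z₀, Fin.append w₀ 0) : ℂ) =
      (1 / (G (z₀, Fin.append w₀ 0) : ℂ)) *
        ∑ a : Fin n, ∑ b : Fin n, ginv a b *
          ∑ c : Fin s, ∑ d : Fin s,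
            (Gmat G (z₀, Fin.append w₀ 0))⁻¹ (Fin.natAdd rp c) (Fin.natAdd rp d) *
              (∑ i : Fin rp,
                wz a (fun q => Gmat G q (Fin.castAdd s i) (Fin.natAdd rp c))
                  (z₀, Fin.append w₀ 0) * w₀ i) *
              (starRingEnd ℂ) (∑ j : Fin rp,
                wz b (fun q => Gmat G q (Fin.castAdd s j) (Fin.natAdd rp d))
                  (z₀, Fin.append w₀ 0) * w₀ j) ∧
    0 ≤ ((1 / (G (z₀, Fin.append w₀ 0) : ℂ)) *
        ∑ a : Fin n, ∑ b : Fin n, ginv a b *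
          ∑ c : Fin s, ∑ d : Fin s,
            (Gmat G (z₀, Fin.append w₀ 0))⁻¹ (Fin.natAdd rp c) (Fin.natAdd rp d) *
              (∑ i : Fin rp,
                wz a (fun q => Gmat G q (Fin.castAdd s i) (Fin.natAdd rp c))
                  (z₀, Fin.append w₀ 0) * w₀ i) *
              (starRingEnd ℂ) (∑ j : Fin rp,
                wz b (fun q => Gmat G q (Fin.castAdd s j) (Fin.natAdd rp d))
                  (z₀, Fin.append w₀ 0) * w₀ j)).re ∧
    ((1 / (G (z₀, Fin.append w₀ 0) : ℂ)) *
        ∑ a : Fin n, ∑ b : Fin n, ginv a b *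
          ∑ c : Fin s, ∑ d : Fin s,
            (Gmat G (z₀, Fin.append w₀ 0))⁻¹ (Fin.natAdd rp c) (Fin.natAdd rp d) *
              (∑ i : Fin rp,
                wz a (fun q => Gmat G q (Fin.castAdd s i) (Fin.natAdd rp c))
                  (z₀, Fin.append w₀ 0) * w₀ i) *
              (starRingEnd ℂ) (∑ j : Fin rp,
                wz b (fun q => Gmat G q (Fin.castAdd s j) (Fin.natAdd rp d))
                  (z₀, Fin.append w₀ 0) * w₀ j)).im = 0 := by
  classical
  set G' : Dom n rp → ℝ := fun q' => G (q'.1, Fin.append q'.2 0) with hG'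
  have hU'open : IsOpen {p : Dom n (rp + s) | p.2 ≠ 0} :=
    isOpen_compl_singleton.preimage continuous_snd
  have hUopen : IsOpen {q : Dom n rp | q.2 ≠ 0} :=
    isOpen_compl_singleton.preimage continuous_snd
  have hsm' : ContDiffOn ℝ (⊤ : ℕ∞) (cx G) {p : Dom n (rp + s) | p.2 ≠ 0} := hsm.of_le (by simp)
  have dAt : ∀ {f : Dom n (rp + s) → ℂ},
      ContDiffOn ℝ (⊤ : ℕ∞) f {p : Dom n (rp + s) | p.2 ≠ 0} →
      ∀ {p : Dom n (rp + s)}, p.2 ≠ 0 → DifferentiableAt ℝ f p := by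
    intro f hf p hp
    exact (hf.differentiableOn (by simp)).differentiableAt
      (hU'open.mem_nhds hp)
  have sm1 : ∀ k, ContDiffOn ℝ (⊤ : ℕ∞) (wv k (cx G)) {p : Dom n (rp + s) | p.2 ≠ 0} :=
    fun k => contDiffOn_wv hU'open hsm' k
  have sm2 : ∀ k l, ContDiffOn ℝ (⊤ : ℕ∞) (fun q => Gmat G q k l)
      {p : Dom n (rp + s) | p.2 ≠ 0} :=
    fun k l => contDiffOn_wvb hU'open (sm1 k) l
  have sm3 : ∀ (a : Fin n) k l, ContDiffOn ℝ (⊤ : ℕ∞)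
      (wz a (fun q => Gmat G q k l)) {p : Dom n (rp + s) | p.2 ≠ 0} :=
    fun a k l => contDiffOn_wz hU'open (sm2 k l) a
  have hGmatL : ∀ (q : Dom n rp), q.2 ≠ 0 → ∀ (i j : Fin rp),
      Gmat G' q i j = Gmat G (Lmap n rp s q) (Fin.castAdd s i) (Fin.castAdd s j) := by
    intro q hq i j
    have hev : wv i (cx G') =ᶠ[nhds q] fun p => wv (Fin.castAdd s i) (cx G) (Lmap n rp s p) :=
      Filter.eventuallyEq_of_mem (hUopen.mem_nhds hq) (fun q' hq' =>
        wv_comp_Lmap i (dAt hsm' (Lmap_snd_ne_zero hq')))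
    show wvb j (wv i (cx G')) q = _
    rw [wvb_congr hev, wvb_comp_Lmap j (dAt (sm1 _) (Lmap_snd_ne_zero hq))]
    rfl
  have hwzL : ∀ (q : Dom n rp), q.2 ≠ 0 → ∀ (a : Fin n) (i j : Fin rp),
      wz a (fun p => Gmat G' p i j) q
        = wz a (fun p => Gmat G p (Fin.castAdd s i) (Fin.castAdd s j)) (Lmap n rp s q) := by
    intro q hq a i j
    have hev : (fun p => Gmat G' p i j)
        =ᶠ[nhds q] fun p => Gmat G (Lmap n rp s p) (Fin.castAdd s i) (Fin.castAdd s j) :=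
      Filter.eventuallyEq_of_mem (hUopen.mem_nhds hq) (fun q' hq' => hGmatL q' hq' i j)
    rw [wz_congr hev, wz_comp_Lmap a (dAt (sm2 _ _) (Lmap_snd_ne_zero hq))]
  have hP2 : (Fin.append w₀ (0 : Fin s → ℂ)) ≠ 0 :=
    Lmap_snd_ne_zero (p := (z₀, w₀)) hw₀
  have hN1 : ∀ (a : Fin n) (i j : Fin rp),
      wz a (fun p => Gmat G p (Fin.castAdd s i) (Fin.castAdd s j)) (z₀, Fin.append w₀ 0) = 0 := by
    intro a i j
    have h := hnormal i j a
    rwa [hwzL (z₀, w₀) hw₀ a i j] at h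
  have hconj : ∀ (b : Fin n) (k l : Fin (rp + s)) (p : Dom n (rp + s)), p.2 ≠ 0 →
      wzb b (fun q => Gmat G q k l) p
        = (starRingEnd ℂ) (wz b (fun q => Gmat G q l k) p) := by
    intro b k l p hp
    have hev : (fun q => Gmat G q k l)
        =ᶠ[nhds p] fun q => (starRingEnd ℂ) (Gmat G q l k) :=
      Filter.eventuallyEq_of_mem (hU'open.mem_nhds hp) (fun q' hq' => by
        exact (Matrix.IsHermitian.apply (hpos q' hq').1 k l).symm)
    rw [wzb_congr hev, wzb_conj]
  have hN2 : ∀ (b : Fin n) (j : Fin rp) (k : Fin (rp + s)),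
      wzb b (fun q => Gmat G q k (Fin.castAdd s j)) (z₀, Fin.append w₀ 0)
        = (starRingEnd ℂ) (wz b (fun q => Gmat G q (Fin.castAdd s j) k) (z₀, Fin.append w₀ 0)) :=
    fun b j k => hconj b k (Fin.castAdd s j) (z₀, Fin.append w₀ 0) hP2
  have hN2z : ∀ (b : Fin n) (j k : Fin rp),
      wzb b (fun q => Gmat G q (Fin.castAdd s k) (Fin.castAdd s j)) (z₀, Fin.append w₀ 0) = 0 := by
    intro b j k
    rw [hN2 b j (Fin.castAdd s k), hN1, map_zero]
  have hKG' : ∀ (i j : Fin rp) (a b : Fin n),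
      KobT G' i j a b (z₀, w₀)
        = -(wzb b (wz a fun q => Gmat G q (Fin.castAdd s i) (Fin.castAdd s j))
            (z₀, Fin.append w₀ 0)) := by
    intro i j a b
    have h2 : (∑ k : Fin rp, ∑ l : Fin rp,
        (Gmat G' (z₀, w₀))⁻¹ l k * wz a (fun q => Gmat G' q i l) (z₀, w₀)
          * wzb b (fun q => Gmat G' q k j) (z₀, w₀)) = 0 :=
      Finset.sum_eq_zero fun k _ => Finset.sum_eq_zero fun l _ => by
        rw [hnormal i l a]; ring
    show -(wzb b (wz a fun q => Gmat G' q i j) (z₀, w₀)) + _ = _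
    rw [h2, add_zero]
    congr 1
    have hev : (wz a fun q => Gmat G' q i j) =ᶠ[nhds ((z₀, w₀) : Dom n rp)]
        fun p => wz a (fun q => Gmat G q (Fin.castAdd s i) (Fin.castAdd s j)) (Lmap n rp s p) :=
      Filter.eventuallyEq_of_mem (hUopen.mem_nhds hw₀) (fun q' hq' => hwzL q' hq' a i j)
    rw [wzb_congr hev, wzb_comp_Lmap b (dAt (sm3 a _ _) (Lmap_snd_ne_zero (p := (z₀, w₀)) hw₀))]
    rfl
  have hK : ∀ (i j : Fin rp) (a b : Fin n),
      KobT G (Fin.castAdd s i) (Fin.castAdd s j) a b (z₀, Fin.append w₀ 0)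
        - KobT G' i j a b (z₀, w₀)
        = ∑ c : Fin s, ∑ d : Fin s,
            (Gmat G (z₀, Fin.append w₀ 0))⁻¹ (Fin.natAdd rp c) (Fin.natAdd rp d)
              * wz a (fun q => Gmat G q (Fin.castAdd s i) (Fin.natAdd rp c)) (z₀, Fin.append w₀ 0)
              * (starRingEnd ℂ) (wz b (fun q => Gmat G q (Fin.castAdd s j) (Fin.natAdd rp d))
                  (z₀, Fin.append w₀ 0)) := by
    intro i j a b
    rw [hKG' i j a b]
    show -(wzb b (wz a fun q => Gmat G q (Fin.castAdd s i) (Fin.castAdd s j))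
        (z₀, Fin.append w₀ 0)) + _ - _ = _
    rw [show ∀ X S : ℂ, -X + S - -X = S from fun X S => by ring]
    have hsplit : (∑ k : Fin (rp + s), ∑ l : Fin (rp + s),
          (Gmat G (z₀, Fin.append w₀ 0))⁻¹ l k
            * wz a (fun q => Gmat G q (Fin.castAdd s i) l) (z₀, Fin.append w₀ 0)
            * wzb b (fun q => Gmat G q k (Fin.castAdd s j)) (z₀, Fin.append w₀ 0))
        = ∑ d : Fin s, ∑ c : Fin s,
            (Gmat G (z₀, Fin.append w₀ 0))⁻¹ (Fin.natAdd rp c) (Fin.natAdd rp d)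
              * wz a (fun q => Gmat G q (Fin.castAdd s i) (Fin.natAdd rp c)) (z₀, Fin.append w₀ 0)
              * wzb b (fun q => Gmat G q (Fin.natAdd rp d) (Fin.castAdd s j))
                  (z₀, Fin.append w₀ 0) := by
      rw [Fin.sum_univ_add]
      rw [show (∑ k : Fin rp, ∑ l : Fin (rp + s),
          (Gmat G (z₀, Fin.append w₀ 0))⁻¹ l (Fin.castAdd s k)
            * wz a (fun q => Gmat G q (Fin.castAdd s i) l) (z₀, Fin.append w₀ 0)
            * wzb b (fun q => Gmat G q (Fin.castAdd s k) (Fin.castAdd s j))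
                (z₀, Fin.append w₀ 0)) = 0 from
        Finset.sum_eq_zero fun k _ => Finset.sum_eq_zero fun l _ => by
          rw [hN2z b j k]; ring, zero_add]
      refine Finset.sum_congr rfl fun d _ => ?_
      rw [Fin.sum_univ_add]
      rw [show (∑ l : Fin rp,
          (Gmat G (z₀, Fin.append w₀ 0))⁻¹ (Fin.castAdd s l) (Fin.natAdd rp d)
            * wz a (fun q => Gmat G q (Fin.castAdd s i) (Fin.castAdd s l)) (z₀, Fin.append w₀ 0)
            * wzb b (fun q => Gmat G q (Fin.natAdd rp d) (Fin.castAdd s j))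
                (z₀, Fin.append w₀ 0)) = 0 from
        Finset.sum_eq_zero fun l _ => by rw [hN1 a i l]; ring, zero_add]
    rw [hsplit, Finset.sum_comm]
    refine Finset.sum_congr rfl fun c _ => Finset.sum_congr rfl fun d _ => ?_
    rw [hN2 b j (Fin.natAdd rp d)]
  -- the numerator identity
  have hnum : (∑ a : Fin n, ∑ b : Fin n, ginv a b *
        ∑ i : Fin rp, ∑ j : Fin rp,
          (KobT G (Fin.castAdd s i) (Fin.castAdd s j) a b (z₀, Fin.append w₀ 0) -
              KobT G' i j a b (z₀, w₀)) *
            w₀ i * (starRingEnd ℂ) (w₀ j))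
      = ∑ a : Fin n, ∑ b : Fin n, ginv a b *
          ∑ c : Fin s, ∑ d : Fin s,
            (Gmat G (z₀, Fin.append w₀ 0))⁻¹ (Fin.natAdd rp c) (Fin.natAdd rp d) *
              (∑ i : Fin rp,
                wz a (fun q => Gmat G q (Fin.castAdd s i) (Fin.natAdd rp c))
                  (z₀, Fin.append w₀ 0) * w₀ i) *
              (starRingEnd ℂ) (∑ j : Fin rp,
                wz b (fun q => Gmat G q (Fin.castAdd s j) (Fin.natAdd rp d))
                  (z₀, Fin.append w₀ 0) * w₀ j) := by
    refine Finset.sum_congr rfl fun a _ => Finset.sum_congr rfl fun b _ => ?_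
    congr 1
    rw [show (∑ i : Fin rp, ∑ j : Fin rp,
        (KobT G (Fin.castAdd s i) (Fin.castAdd s j) a b (z₀, Fin.append w₀ 0) -
            KobT G' i j a b (z₀, w₀)) * w₀ i * (starRingEnd ℂ) (w₀ j))
      = ∑ i : Fin rp, ∑ j : Fin rp,
          (∑ c : Fin s, ∑ d : Fin s,
            (Gmat G (z₀, Fin.append w₀ 0))⁻¹ (Fin.natAdd rp c) (Fin.natAdd rp d)
              * wz a (fun q => Gmat G q (Fin.castAdd s i) (Fin.natAdd rp c)) (z₀, Fin.append w₀ 0)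
              * (starRingEnd ℂ) (wz b (fun q => Gmat G q (Fin.castAdd s j) (Fin.natAdd rp d))
                  (z₀, Fin.append w₀ 0))) * w₀ i * (starRingEnd ℂ) (w₀ j) from
      Finset.sum_congr rfl fun i _ => Finset.sum_congr rfl fun j _ => by rw [hK i j a b]]
    exact rearrange _ _ _ _
  -- positivity setup
  have hg : 0 < G (z₀, Fin.append w₀ 0) := hGpos _ hP2
  set Mmat : Matrix (Fin s) (Fin s) ℂ :=
    ((Gmat G (z₀, Fin.append w₀ 0))⁻¹).submatrix (Fin.natAdd rp) (Fin.natAdd rp) with hMmat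
  set W : Matrix (Fin n) (Fin s) ℂ := Matrix.of fun a c =>
    ∑ i : Fin rp, wz a (fun q => Gmat G q (Fin.castAdd s i) (Fin.natAdd rp c))
      (z₀, Fin.append w₀ 0) * w₀ i with hW
  have hMpsd : Mmat.PosSemidef :=
    ((hpos _ hP2).inv.posSemidef).submatrix (Fin.natAdd rp)
  have hYpsd : (W * Mmat * W.conjTranspose).PosSemidef :=
    hMpsd.mul_mul_conjTranspose_same W
  have hQ : (∑ a : Fin n, ∑ b : Fin n, ginv a b *
          ∑ c : Fin s, ∑ d : Fin s,
            (Gmat G (z₀, Fin.append w₀ 0))⁻¹ (Fin.natAdd rp c) (Fin.natAdd rp d) *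
              (∑ i : Fin rp,
                wz a (fun q => Gmat G q (Fin.castAdd s i) (Fin.natAdd rp c))
                  (z₀, Fin.append w₀ 0) * w₀ i) *
              (starRingEnd ℂ) (∑ j : Fin rp,
                wz b (fun q => Gmat G q (Fin.castAdd s j) (Fin.natAdd rp d))
                  (z₀, Fin.append w₀ 0) * w₀ j))
      = ∑ a : Fin n, ∑ b : Fin n, ginv a b * (W * Mmat * W.conjTranspose) a b := by
    refine Finset.sum_congr rfl fun a _ => Finset.sum_congr rfl fun b _ => ?_
    congr 1
    simp only [Matrix.mul_apply, Matrix.conjTranspose_apply, Matrix.submatrix_apply,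
      Matrix.of_apply, Finset.sum_mul, hMmat, hW]
    rw [Finset.sum_comm]
    refine Finset.sum_congr rfl fun c _ => Finset.sum_congr rfl fun d _ => ?_
    rw [← Finset.sum_mul]
    congr 1
    rw [Finset.mul_sum]
    exact Finset.sum_congr rfl fun x _ => by ring
  have hle : (0 : ℂ) ≤ ∑ a : Fin n, ∑ b : Fin n, ginv a b *
          ∑ c : Fin s, ∑ d : Fin s,
            (Gmat G (z₀, Fin.append w₀ 0))⁻¹ (Fin.natAdd rp c) (Fin.natAdd rp d) *
              (∑ i : Fin rp,
                wz a (fun q => Gmat G q (Fin.castAdd s i) (Fin.natAdd rp c))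
                  (z₀, Fin.append w₀ 0) * w₀ i) *
              (starRingEnd ℂ) (∑ j : Fin rp,
                wz b (fun q => Gmat G q (Fin.castAdd s j) (Fin.natAdd rp d))
                  (z₀, Fin.append w₀ 0) * w₀ j) := by
    rw [hQ]
    exact pos_aux _ _ hginv.posSemidef hYpsd
  obtain ⟨hre0, him0⟩ := Complex.le_def.mp hle
  have h1G : (1 / (G (z₀, Fin.append w₀ 0) : ℂ))
      = ((1 / G (z₀, Fin.append w₀ 0) : ℝ) : ℂ) := by push_cast; ring
  refine ⟨?_, ?_, ?_⟩
  · rw [hnum, div_eq_mul_inv, one_div, mul_comm]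
  · rw [h1G, Complex.re_ofReal_mul]
    have hpos1 : (0:ℝ) ≤ 1 / G (z₀, Fin.append w₀ 0) := by positivity
    exact mul_nonneg hpos1 hre0
  · rw [h1G, Complex.im_ofReal_mul, ← him0, Complex.zero_im, mul_zero]
end
end
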